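/- arXiv:1502.04821 — 8 statements merged into one kernel-verified Lean document; each statement's English description precedes it below -/
import Mathlib

section
/- Let G, H be finite groups with canonical inclusions ι_G : G → G×H and ι_H : H → G×H, and let X be a finite G-set and Y a finite H-set. Then the category of finite (G×H)-sets over the (G×H)-set (Ind_{ι_G} X) ⊔ (Ind_{ι_H} Y) is equivalent to the product category (G-Set/X) × (H-Set/Y). -/
open CategoryTheory

/-- Relation defining the induced `K`-set `Ind_ι X = K ×_G X` along `ι : G →* K`. -/
def indRel8 {K G : Type} [Group K] [Group G] (ι : G →* K) (X : Type) [MulAction G X] :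
    K × X → K × X → Prop :=
  fun p q => ∃ g : G, p.1 = q.1 * ι g ∧ q.2 = g • p.2

/-- The `K`-action `k • [ξ, x] = [k ξ, x]` on the induced set. -/
instance indAction8 {K G : Type} [Group K] [Group G] (ι : G →* K) (X : Type) [MulAction G X] :
    MulAction K (Quot (indRel8 ι X)) where
  smul k := Quot.lift (fun p => Quot.mk (indRel8 ι X) (k * p.1, p.2)) (by
    rintro p q ⟨g, h1, h2⟩
    exact Quot.sound ⟨g, by rw [h1, mul_assoc], h2⟩)
  one_smul := by
    intro q
    obtain ⟨p, rfl⟩ := Quot.exists_rep q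
    show Quot.mk _ (1 * p.1, p.2) = Quot.mk _ p
    rw [one_mul]
  mul_smul := by
    intro k k' q
    obtain ⟨p, rfl⟩ := Quot.exists_rep q
    show Quot.mk _ (k * k' * p.1, p.2) = Quot.mk _ (k * (k' * p.1), p.2)
    rw [mul_assoc]

/-- Componentwise action on a disjoint union (bicoproduct) of `K`-sets. -/
instance sumAction8 {K A B : Type} [Monoid K] [MulAction K A] [MulAction K B] :
    MulAction K (A ⊕ B) where
  smul k := Sum.map (fun a => k • a) (fun b => k • b)
  one_smul := by
    rintro (a | b)
    · show Sum.inl ((1 : K) • a) = Sum.inl a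
      rw [one_smul]
    · show Sum.inr ((1 : K) • b) = Sum.inr b
      rw [one_smul]
  mul_smul := by
    rintro k k' (a | b)
    · show Sum.inl ((k * k') • a) = Sum.inl (k • k' • a)
      rw [mul_smul]
    · show Sum.inr ((k * k') • b) = Sum.inr (k • k' • b)
      rw [mul_smul]

/-- The category of finite `K`-sets over a fixed `K`-set `Z`: objects are
finite `K`-sets equipped with an equivariant structure map to `Z`. -/
structure FinGSetOver (K : Type) [Group K] (Z : Type) [MulAction K Z] : Type 1 where
  carrier : Type
  [act : MulAction K carrier]
  [fin : Finite carrier]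
  str : carrier → Z
  equivar : ∀ (k : K) (a : carrier), str (k • a) = k • str a

attribute [instance] FinGSetOver.act FinGSetOver.fin

instance FinGSetOverCategory (K : Type) [Group K] (Z : Type) [MulAction K Z] :
    Category (FinGSetOver K Z) where
  Hom F F' := {φ : F.carrier → F'.carrier //
    (∀ (k : K) (a : F.carrier), φ (k • a) = k • φ a) ∧ ∀ a, F'.str (φ a) = F.str a}
  id F := ⟨fun a => a, ⟨fun _ _ => rfl, fun _ => rfl⟩⟩
  comp φ ψ := ⟨fun a => ψ.1 (φ.1 a),
    ⟨fun k a => by simp only [φ.2.1, ψ.2.1], fun a => by simp only [ψ.2.2, φ.2.2]⟩⟩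
  id_comp := by intros; rfl
  comp_id := by intros; rfl
  assoc := by intros; rfl

/-!
A `K`-set over `A ⊔ B` is the disjoint union of its parts over `A` and over `B`. For an injective
`ι : G →* K`, a `K`-set `F` over `K ×_G X` is recovered as `K ×_G F₀` from the `G`-set `F₀` lying
over the image of `x ↦ [1, x]`: every element of `F` is a translate `k • a` of one over that image,
uniquely up to `(k ι g, a) ~ (k, ι g • a)`. Both "parts over" are fibre products of `F` with an
injective map into the base that is equivariant along a group homomorphism.
-/

namespace FinGSetOver

variable {K : Type} [Group K] {Z : Type} [MulAction K Z]

@[ext]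
lemma hom_ext {F F' : FinGSetOver K Z} {φ ψ : F ⟶ F'} (h : ∀ a, φ.1 a = ψ.1 a) : φ = ψ :=
  Subtype.ext (funext h)

noncomputable def isoOfBijective {F F' : FinGSetOver K Z} (φ : F ⟶ F')
    (hφ : Function.Bijective φ.1) : F ≅ F' where
  hom := φ
  inv := ⟨(Equiv.ofBijective φ.1 hφ).symm,
    fun k a => hφ.1 (by simp only [φ.2.1 k, Equiv.ofBijective_apply_symm_apply]),
    fun a => by
      rw [← φ.2.2]
      exact congrArg F'.str (Equiv.ofBijective_apply_symm_apply φ.1 hφ a)⟩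
  hom_inv_id := by ext a; exact (Equiv.ofBijective φ.1 hφ).symm_apply_apply a
  inv_hom_id := by ext a; exact (Equiv.ofBijective φ.1 hφ).apply_symm_apply a

section Pullback

variable {G : Type} [Group G] {X : Type} [MulAction G X] {f : X → Z}

lemma pullbackFst_injective (hinj : Function.Injective f) {A : Type} (s : A → Z) :
    Function.Injective fun p : {p : A × X // s p.1 = f p.2} => p.1.1 :=
  fun p q (h : p.1.1 = q.1.1) => Subtype.ext (Prod.ext h (hinj (by rw [← p.2, ← q.2, h])))

abbrev pullback (ι : G →* K) (hf : ∀ (g : G) (x : X), f (g • x) = ι g • f x)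
    (hinj : Function.Injective f) (F : FinGSetOver K Z) : FinGSetOver G X where
  carrier := {p : F.carrier × X // F.str p.1 = f p.2}
  act :=
    { smul g p := ⟨(ι g • p.1.1, g • p.1.2), by rw [F.equivar, p.2, hf]⟩
      one_smul p := Subtype.ext <| by
        show (ι 1 • _, (1 : G) • _) = _
        rw [map_one, one_smul, one_smul]
      mul_smul g g' p := Subtype.ext <| by
        show (ι (g * g') • _, (g * g') • _) = (ι g • ι g' • _, g • g' • _)
        rw [map_mul, mul_smul, mul_smul] }
  fin := Finite.of_injective _ (pullbackFst_injective hinj F.str)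
  str p := p.1.2
  equivar _ _ := rfl

abbrev pullbackFunctor (ι : G →* K) (hf : ∀ (g : G) (x : X), f (g • x) = ι g • f x)
    (hinj : Function.Injective f) : FinGSetOver K Z ⥤ FinGSetOver G X where
  obj := pullback ι hf hinj
  map φ := ⟨fun p => ⟨(φ.1 p.1.1, p.1.2), by rw [φ.2.2, p.2]⟩,
    fun g p => Subtype.ext (Prod.ext (φ.2.1 _ _) rfl), fun _ => rfl⟩

def toPullback (ι : G →* K) (hf : ∀ (g : G) (x : X), f (g • x) = ι g • f x)
    (hinj : Function.Injective f) {E : FinGSetOver G X} {F : FinGSetOver K Z}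
    (u : E.carrier → F.carrier) (hu : ∀ (g : G) (b : E.carrier), u (g • b) = ι g • u b)
    (hstr : ∀ b, F.str (u b) = f (E.str b)) : E ⟶ pullback ι hf hinj F :=
  ⟨fun b => ⟨(u b, E.str b), hstr b⟩,
    fun g b => Subtype.ext (Prod.ext (hu g b) (E.equivar g b)), fun _ => rfl⟩

lemma toPullback_bijective {ι : G →* K} {hf : ∀ (g : G) (x : X), f (g • x) = ι g • f x}
    {hinj : Function.Injective f} {E : FinGSetOver G X} {F : FinGSetOver K Z}
    {u : E.carrier → F.carrier} (hu : ∀ (g : G) (b : E.carrier), u (g • b) = ι g • u b)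
    (hstr : ∀ b, F.str (u b) = f (E.str b)) (hinj_u : Function.Injective u)
    (hrange : ∀ a x, F.str a = f x → a ∈ Set.range u) :
    Function.Bijective (toPullback ι hf hinj u hu hstr).1 := by
  refine ⟨fun b b' h => hinj_u (congrArg (fun p => p.1.1) h), ?_⟩
  rintro ⟨⟨a, x⟩, h⟩
  obtain ⟨b, rfl⟩ := hrange a x h
  exact ⟨b, Subtype.ext (Prod.ext rfl (hinj ((hstr b).symm.trans h)))⟩

end Pullback

section Sum

variable {A B : Type} [MulAction K A] [MulAction K B]

def sum (E : FinGSetOver K A) (F : FinGSetOver K B) : FinGSetOver K (A ⊕ B) where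
  carrier := E.carrier ⊕ F.carrier
  str := Sum.map E.str F.str
  equivar k := by
    rintro (a | b)
    exacts [congrArg Sum.inl (E.equivar k a), congrArg Sum.inr (F.equivar k b)]

def sumFunctor : FinGSetOver K A × FinGSetOver K B ⥤ FinGSetOver K (A ⊕ B) where
  obj P := sum P.1 P.2
  map φ := ⟨Sum.map φ.1.1 φ.2.1,
    fun k => by
      rintro (a | b)
      exacts [congrArg Sum.inl (φ.1.2.1 k a), congrArg Sum.inr (φ.2.2.1 k b)],
    by
      rintro (a | b)
      exacts [congrArg Sum.inl (φ.1.2.2 a), congrArg Sum.inr (φ.2.2.2 b)]⟩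
  map_id _ := by ext (a | b) <;> rfl
  map_comp _ _ := by ext (a | b) <;> rfl

abbrev pullbackInl : FinGSetOver K (A ⊕ B) ⥤ FinGSetOver K A :=
  pullbackFunctor (MonoidHom.id K) (f := Sum.inl) (fun _ _ => rfl) Sum.inl_injective

abbrev pullbackInr : FinGSetOver K (A ⊕ B) ⥤ FinGSetOver K B :=
  pullbackFunctor (MonoidHom.id K) (f := Sum.inr) (fun _ _ => rfl) Sum.inr_injective

def sumPullbackHom (F : FinGSetOver K (A ⊕ B)) :
    sum (pullbackInl.obj F) (pullbackInr.obj F) ⟶ F :=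
  ⟨Sum.elim (fun p => p.1.1) (fun p => p.1.1), fun _ => by rintro (p | p) <;> rfl,
    by rintro (p | p) <;> exact p.2⟩

lemma sumPullbackHom_bijective (F : FinGSetOver K (A ⊕ B)) :
    Function.Bijective (sumPullbackHom F).1 := by
  refine ⟨?_, fun a => ?_⟩
  · rintro (p | p) (q | q) (h : p.1.1 = q.1.1)
    · exact congrArg Sum.inl (pullbackFst_injective Sum.inl_injective F.str h)
    · exact absurd (p.2.symm.trans (h ▸ q.2)) Sum.inl_ne_inr
    · exact absurd (p.2.symm.trans (h ▸ q.2)) Sum.inr_ne_inl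
    · exact congrArg Sum.inr (pullbackFst_injective Sum.inr_injective F.str h)
  · rcases h : F.str a with x | y
    exacts [⟨Sum.inl ⟨(a, x), h⟩, rfl⟩, ⟨Sum.inr ⟨(a, y), h⟩, rfl⟩]

def inlToPullback (E : FinGSetOver K A) (F : FinGSetOver K B) :
    E ⟶ pullbackInl.obj (sum E F) :=
  toPullback _ (fun _ _ => rfl) Sum.inl_injective Sum.inl (fun _ _ => rfl) fun _ => rfl

def inrToPullback (E : FinGSetOver K A) (F : FinGSetOver K B) :
    F ⟶ pullbackInr.obj (sum E F) :=
  toPullback _ (fun _ _ => rfl) Sum.inr_injective Sum.inr (fun _ _ => rfl) fun _ => rfl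

lemma inlToPullback_bijective (E : FinGSetOver K A) (F : FinGSetOver K B) :
    Function.Bijective (inlToPullback E F).1 := by
  refine toPullback_bijective _ _ (fun _ _ => Sum.inl.inj) ?_
  rintro (a | b) x h
  exacts [⟨a, rfl⟩, absurd h Sum.inr_ne_inl]

lemma inrToPullback_bijective (E : FinGSetOver K A) (F : FinGSetOver K B) :
    Function.Bijective (inrToPullback E F).1 := by
  refine toPullback_bijective _ _ (fun _ _ => Sum.inr.inj) ?_
  rintro (a | b) x h
  exacts [absurd h Sum.inl_ne_inr, ⟨b, rfl⟩]

noncomputable def sumEquivalence : FinGSetOver K (A ⊕ B) ≌ FinGSetOver K A × FinGSetOver K B :=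
  CategoryTheory.Equivalence.mk (pullbackInl.prod' pullbackInr) sumFunctor
    (NatIso.ofComponents (fun F => isoOfBijective _ (sumPullbackHom_bijective F))
      fun φ => by ext (p | p) <;> rfl).symm
    (NatIso.ofComponents (fun P => Iso.prod
        (isoOfBijective _ (inlToPullback_bijective P.1 P.2))
        (isoOfBijective _ (inrToPullback_bijective P.1 P.2)))
      fun φ => Prod.ext (by ext; exact pullbackFst_injective Sum.inl_injective _ rfl)
        (by ext; exact pullbackFst_injective Sum.inr_injective _ rfl)).symm

end Sum

section Ind

variable {G : Type} [Group G] (ι : G →* K) {X : Type} [MulAction G X]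

lemma indRel8_equivalence : _root_.Equivalence (indRel8 ι X) where
  refl p := ⟨1, by rw [map_one, mul_one], (one_smul G _).symm⟩
  symm := by
    rintro p q ⟨g, h1, h2⟩
    exact ⟨g⁻¹, by rw [h1, map_inv, mul_inv_cancel_right], by rw [h2, inv_smul_smul]⟩
  trans := by
    rintro p q r ⟨g, h1, h2⟩ ⟨g', h1', h2'⟩
    exact ⟨g' * g, by rw [h1, h1', map_mul, mul_assoc], by rw [h2', h2, mul_smul]⟩

lemma ind_mk_eq_mk_iff {p q : K × X} :
    Quot.mk (indRel8 ι X) p = Quot.mk _ q ↔ indRel8 ι X p q :=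
  ⟨fun h => (indRel8_equivalence ι).eqvGen_iff.1 (Quot.eqvGen_exact h), Quot.sound⟩

def indOf (x : X) : Quot (indRel8 ι X) :=
  Quot.mk _ (1, x)

lemma smul_indOf (k : K) (x : X) : k • indOf ι x = Quot.mk _ (k, x) := by
  show Quot.mk _ (k * 1, x) = _
  rw [mul_one]

lemma indOf_smul (g : G) (x : X) : indOf ι (g • x) = ι g • indOf ι x := by
  rw [smul_indOf]
  exact (Quot.sound ⟨g, (one_mul _).symm, rfl⟩).symm

lemma indOf_injective (hι : Function.Injective ι) : Function.Injective (indOf ι (X := X)) := by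
  intro x y h
  obtain ⟨g, h1, rfl⟩ := (ind_mk_eq_mk_iff ι).1 h
  obtain rfl : g = 1 := hι ((one_mul _).symm.trans (h1.symm.trans (map_one ι).symm))
  exact (one_smul G x).symm

def indMap {B C : Type} [MulAction G B] [MulAction G C] (u : B → C)
    (hu : ∀ (g : G) (b : B), u (g • b) = g • u b) :
    Quot (indRel8 ι B) → Quot (indRel8 ι C) :=
  Quot.lift (fun p => Quot.mk _ (p.1, u p.2)) fun _ _ ⟨g, h1, h2⟩ =>
    Quot.sound ⟨g, h1, by rw [h2, hu]⟩

def ind [Finite K] (E : FinGSetOver G X) : FinGSetOver K (Quot (indRel8 ι X)) where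
  carrier := Quot (indRel8 ι E.carrier)
  str := indMap ι E.str E.equivar
  equivar _ := Quot.ind fun _ => rfl

def indFunctor [Finite K] : FinGSetOver G X ⥤ FinGSetOver K (Quot (indRel8 ι X)) where
  obj := ind ι
  map {E E'} φ := ⟨indMap ι φ.1 φ.2.1, fun _ => Quot.ind fun _ => rfl, Quot.ind fun p => by
    show Quot.mk _ (p.1, E'.str (φ.1 p.2)) = Quot.mk _ (p.1, E.str p.2)
    rw [φ.2.2]⟩
  map_id _ := by ext ξ; induction ξ using Quot.ind; rfl
  map_comp _ _ := by ext ξ; induction ξ using Quot.ind; rfl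

variable (hι : Function.Injective ι)

abbrev restrictFunctor : FinGSetOver K (Quot (indRel8 ι X)) ⥤ FinGSetOver G X :=
  pullbackFunctor ι (indOf_smul ι) (indOf_injective ι hι)

def indRestrictHom [Finite K] (F : FinGSetOver K (Quot (indRel8 ι X))) :
    ind ι ((restrictFunctor ι hι).obj F) ⟶ F :=
  ⟨Quot.lift (fun p => p.1 • p.2.1.1) fun _ _ ⟨g, h1, h2⟩ => by
      rw [h1, h2, mul_smul]; rfl,
    fun k => Quot.ind fun p => mul_smul k p.1 p.2.1.1,
    Quot.ind fun p => by
      show F.str (p.1 • p.2.1.1) = Quot.mk _ (p.1, p.2.1.2)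
      rw [F.equivar, p.2.2, smul_indOf]⟩

lemma indRestrictHom_bijective [Finite K] (F : FinGSetOver K (Quot (indRel8 ι X))) :
    Function.Bijective (indRestrictHom ι hι F).1 := by
  constructor
  · rintro ⟨k, ⟨⟨a, x⟩, ha⟩⟩ ⟨k', ⟨⟨a', x'⟩, ha'⟩⟩ (h : k • a = k' • a')
    have hkx : Quot.mk (indRel8 ι X) (k, x) = Quot.mk _ (k', x') := by
      rw [← smul_indOf, ← smul_indOf, ← ha, ← ha', ← F.equivar, ← F.equivar, h]
    obtain ⟨g, hk : k = k' * ι g, hx⟩ := (ind_mk_eq_mk_iff ι).1 hkx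
    have ha : a' = ι g • a := smul_left_cancel k' (by rw [← h, hk, mul_smul])
    exact Quot.sound ⟨g, hk, Subtype.ext (Prod.ext ha hx)⟩
  · intro a
    obtain ⟨⟨k, x⟩, hkx⟩ := Quot.exists_rep (F.str a)
    refine ⟨Quot.mk _ (k, ⟨(k⁻¹ • a, x), ?_⟩), smul_inv_smul k a⟩
    show F.str (k⁻¹ • a) = indOf ι x
    rw [F.equivar, ← hkx, ← smul_indOf, smul_smul, inv_mul_cancel, one_smul]

def toRestrictInd [Finite K] (E : FinGSetOver G X) :
    E ⟶ (restrictFunctor ι hι).obj (ind ι E) :=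
  toPullback ι (indOf_smul ι) (indOf_injective ι hι) (indOf ι) (indOf_smul ι) fun _ => rfl

lemma toRestrictInd_bijective [Finite K] (E : FinGSetOver G X) :
    Function.Bijective (toRestrictInd ι hι E).1 := by
  refine toPullback_bijective _ _ (fun _ _ h => indOf_injective ι hι h) ?_
  rintro ⟨k, b⟩ x h
  obtain ⟨g, hk : k = 1 * ι g, -⟩ := (ind_mk_eq_mk_iff ι).1 h
  exact ⟨g • b, by rw [indOf_smul, smul_indOf, hk, one_mul]⟩

noncomputable def indEquivalence [Finite K] :
    FinGSetOver K (Quot (indRel8 ι X)) ≌ FinGSetOver G X :=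
  CategoryTheory.Equivalence.mk (restrictFunctor ι hι) (indFunctor ι)
    (NatIso.ofComponents (fun F => isoOfBijective _ (indRestrictHom_bijective ι hι F))
      fun φ => by ext ξ; induction ξ using Quot.ind; exact (φ.2.1 _ _).symm).symm
    (NatIso.ofComponents (fun E => isoOfBijective _ (toRestrictInd_bijective ι hι E))
      fun φ => by ext; apply pullbackFst_injective (indOf_injective ι hι); rfl).symm

end Ind

end FinGSetOver

theorem over_bicoproduct_equivalence_general
    (G H : Type) [Group G] [Group H] [Finite G] [Finite H]
    (X : Type) [MulAction G X] (Y : Type) [MulAction H Y] :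
    Nonempty
      (FinGSetOver (G × H)
          (Quot (indRel8 (MonoidHom.inl G H) X) ⊕ Quot (indRel8 (MonoidHom.inr G H) Y)) ≌
        FinGSetOver G X × FinGSetOver H Y) :=
  ⟨FinGSetOver.sumEquivalence.trans
    ((FinGSetOver.indEquivalence _ fun _ _ h => congrArg Prod.fst h).prod
      (FinGSetOver.indEquivalence _ fun _ _ h => congrArg Prod.snd h))⟩

/-- Let `G, H` be finite groups with the canonical inclusions
`ι_G : G → G × H`, `ι_H : H → G × H`, let `X` be a finite `G`-set and `Y` a
finite `H`-set.  The category of finite `(G × H)`-sets over the `(G × H)`-set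
`Ind_{ι_G} X ⊔ Ind_{ι_H} Y` is equivalent to `(G-Set/X) × (H-Set/Y)`. -/
theorem over_bicoproduct_equivalence
    (G H : Type) [Group G] [Group H] [Finite G] [Finite H]
    (X : Type) [Finite X] [MulAction G X] (Y : Type) [Finite Y] [MulAction H Y] :
    Nonempty
      (FinGSetOver (G × H)
          (Quot (indRel8 (MonoidHom.inl G H) X) ⊕ Quot (indRel8 (MonoidHom.inr G H) Y)) ≌
        FinGSetOver G X × FinGSetOver H Y) :=
  over_bicoproduct_equivalence_general G H X Y
end

section
/- Let G, H be finite groups, X a finite G-set, and θ = {θ_x : G → H}_{x∈X} a family satisfying the cocycle condition θ_x(gg') = θ_{g'x}(g)θ_x(g'). For a G-set (A, a) over X, define A^θ = {p ∈ A | for all g, g' ∈ G, if θ_{a(p)}(g) = θ_{a(p)}(g') and g·a(p) = g'·a(p), then g·p = g'·p}. Then A^θ is a G-subset of A, and the assignment (A, a) ↦ (A^θ, a|_{A^θ}) is an idempotent endofunctor of G-Set/X that is right adjoint to the inclusion of its essential image into G-Set/X. -/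
/-- For a family `θ : X → G → H` and a `G`-set `(A, a)` over `X`, the subset
`A^θ` of points `p` such that `g • p = g' • p` whenever `θ_{a p}(g) = θ_{a p}(g')`
and `g • a p = g' • a p`. -/
def thetaFix (G H : Type) [Group G] [Group H] {X A : Type}
    [MulAction G X] [MulAction G A] (θ : X → G → H) (a : A → X) : Set A :=
  {p | ∀ g g' : G, θ (a p) g = θ (a p) g' → g • a p = g' • a p → g • p = g' • p}

/-- Let `G, H` be finite groups, `X` a finite `G`-set and `θ : X → G → H` a
family satisfying the cocycle condition.  For a finite `G`-set `(A, a)` over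
`X`:
(1) `A^θ` is a `G`-subset of `A`;
(2) every morphism `φ : (A, a) → (A', a')` over `X` maps `A^θ` into `A'^θ`
    (functoriality);
(3) the construction is idempotent: the `G`-subset `A^θ`, viewed as a `G`-set
    over `X` via the restricted action, satisfies `(A^θ)^θ = A^θ`;
(4) `(-)^θ` is right adjoint to the inclusion of its essential image (objects
    with `A'^θ = A'`): any morphism from such an object into `(A, a)` factors
    (uniquely, by restriction of codomain) through `A^θ`. -/
theorem thetaFix_idempotent_right_adjoint
    (G H : Type) [Group G] [Group H] [Finite G] [Finite H]
    (X : Type) [Finite X] [MulAction G X]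
    (θ : X → G → H)
    (hθ : ∀ (x : X) (g g' : G), θ x (g * g') = θ (g' • x) g * θ x g')
    (A : Type) [Finite A] [MulAction G A]
    (a : A → X) (ha : ∀ (g : G) (p : A), a (g • p) = g • a p) :
    (∀ (g : G) (p : A), p ∈ thetaFix G H θ a → g • p ∈ thetaFix G H θ a) ∧
    (∀ (A' : Type) [MulAction G A'] (a' : A' → X),
      (∀ (g : G) (p' : A'), a' (g • p') = g • a' p') →
      ∀ (φ : A → A'), (∀ (g : G) (p : A), φ (g • p) = g • φ p) →
      (∀ p, a' (φ p) = a p) →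
      ∀ p ∈ thetaFix G H θ a, φ p ∈ thetaFix G H θ a') ∧
    (∃ inst : MulAction G {p : A // p ∈ thetaFix G H θ a},
      (∀ (g : G) (p : {p : A // p ∈ thetaFix G H θ a}),
        ((@HSMul.hSMul G _ _ (@instHSMul G _ inst.toSMul) g p :
            {p : A // p ∈ thetaFix G H θ a}) : A) = g • (p : A)) ∧
      @thetaFix G H _ _ X {p : A // p ∈ thetaFix G H θ a} _ inst θ (fun p => a p.1)
        = Set.univ) ∧
    (∀ (A' : Type) [MulAction G A'] (a' : A' → X),
      (∀ (g : G) (p' : A'), a' (g • p') = g • a' p') →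
      thetaFix G H θ a' = Set.univ →
      ∀ (φ : A' → A), (∀ (g : G) (p' : A'), φ (g • p') = g • φ p') →
      (∀ p', a (φ p') = a' p') →
      ∀ p', φ p' ∈ thetaFix G H θ a) := by
  have h1 : ∀ (g : G) (p : A), p ∈ thetaFix G H θ a → g • p ∈ thetaFix G H θ a := by
    intro g p hp g₁ g₂ hth hsm
    rw [ha] at hth hsm
    have hθ' : θ (a p) (g₁ * g) = θ (a p) (g₂ * g) := by
      rw [hθ, hθ, hth]
    have hsm' : (g₁ * g) • a p = (g₂ * g) • a p := by
      rw [mul_smul, mul_smul]; exact hsm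
    have := hp (g₁ * g) (g₂ * g) hθ' hsm'
    rw [mul_smul, mul_smul] at this
    exact this
  refine ⟨h1, ?_, ?_, ?_⟩
  · intro A' _ a' ha' φ hφ hφa p hp g g' hth hsm
    rw [hφa] at hth hsm
    rw [← hφ, ← hφ, hp g g' hth hsm]
  · refine ⟨{ smul := fun g p => ⟨g • p.1, h1 g p.1 p.2⟩
              one_smul := fun p => Subtype.ext (one_smul G p.1)
              mul_smul := fun g g' p => Subtype.ext (mul_smul g g' p.1) }, fun g p => rfl, ?_⟩
    ext p
    simp only [Set.mem_univ, iff_true]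
    intro g g' hth hsm
    exact Subtype.ext (p.2 g g' hth hsm)
  · intro A' _ a' ha' hA' φ hφ hφa p' g g' hth hsm
    rw [hφa] at hth hsm
    have hp' : p' ∈ thetaFix G H θ a' := hA' ▸ Set.mem_univ p'
    rw [← hφ, ← hφ, hp' g g' hth hsm]
end

section
/- Let φ : A → M be a map from a commutative additive monoid A to an abelian group M. Define, for a₁,…,aₙ ∈ A, the finite difference D_{(a₁,…,aₙ)}φ(x) = Σ_{k=0}^n Σ_{1≤i₁<⋯<i_k≤n} (−1)^{n−k} φ(x + a_{i₁} + ⋯ + a_{i_k}). If φ is polynomial (i.e. φ = 0 or some iterated difference of order n vanishes identically), then there exists a unique polynomial map φ̃ : K₀(A) → M extending φ along the group-completion map κ : A → K₀(A), i.e. φ̃ ∘ κ = φ. Moreover, if φ is additive then φ̃ is additive. -/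
/-- The finite difference `(D_a φ)(x) = φ(x + a) − φ(x)`. -/
def finDiff {A M : Type} [AddCommMonoid A] [AddCommGroup M] (a : A) (φ : A → M) : A → M :=
  fun x => φ (x + a) - φ x

/-- The iterated finite difference `D_{(a₁,…,aₙ)}φ`, i.e.
`x ↦ Σ_{k} Σ_{i₁<⋯<i_k} (−1)^{n−k} φ(x + a_{i₁} + ⋯ + a_{i_k})`. -/
def iterDiff {A M : Type} [AddCommMonoid A] [AddCommGroup M] (l : List A) (φ : A → M) : A → M :=
  l.foldr finDiff φ

/-- A map `φ : A → M` into an abelian group is polynomial if `φ = 0` or some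
positive-order iterated finite difference of `φ` vanishes identically. -/
def IsPolynomialMap {A M : Type} [AddCommMonoid A] [AddCommGroup M] (φ : A → M) : Prop :=
  (φ = fun _ => 0) ∨
    ∃ n : ℕ, 0 < n ∧ ∀ l : List A, l.length = n → ∀ x, iterDiff l φ x = 0


/-!
The monoid algebra `ℤ[A]` acts on maps `A → M` by translation, and the `n`-fold difference
`iterDiff [a₁, …, aₙ] φ` is the action of `∏ (of' aᵢ - 1)`, a product of `n` elements of the
augmentation ideal `I`. So if `φ` has degree `< n`, then `I ^ n` annihilates `φ`, and in
`R = ℤ[A] ⧸ Ann φ` every `of' a` is a unit, because `of' a - 1` is nilpotent. By the universal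
property of the group completion, `a ↦ of' a` extends to a homomorphism `σ : K → Rˣ` with
`σ w - 1 ∈ I R` for all `w`. The extension is `φ̃ z = (σ z • φ) 0`: its `n`-fold differences are
given by products of `n` elements of the nilpotent ideal `I R`, so they vanish.

For uniqueness, a polynomial map on `K` that vanishes on `κ A` is invariant under translation by
`κ A` (induction on the degree), hence zero. If `φ` is additive, its additive extension has
degree `< 2`, so it is `φ̃`.
-/

open scoped AddMonoidAlgebra

section IterDiff

variable {A M : Type} [AddCommMonoid A] [AddCommGroup M]

lemma iterDiff_cons (a : A) (l : List A) (φ : A → M) :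
    iterDiff (a :: l) φ = finDiff a (iterDiff l φ) := rfl

lemma iterDiff_append (l₁ l₂ : List A) (φ : A → M) :
    iterDiff (l₁ ++ l₂) φ = iterDiff l₁ (iterDiff l₂ φ) := List.foldr_append

lemma finDiff_zero (a : A) : finDiff a (0 : A → M) = 0 := by
  ext x
  exact sub_self 0

lemma iterDiff_sub (l : List A) (f g : A → M) :
    iterDiff l (f - g) = iterDiff l f - iterDiff l g := by
  induction l with
  | nil => rfl
  | cons a l ih =>
    ext x
    simp only [iterDiff_cons, ih, finDiff, Pi.sub_apply]
    abel

def HasDegreeLT (n : ℕ) (φ : A → M) : Prop :=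
  ∀ l : List A, l.length = n → iterDiff l φ = 0

variable {n m : ℕ} {φ f g : A → M}

lemma HasDegreeLT.succ (h : HasDegreeLT n φ) : HasDegreeLT (n + 1) φ
  | a :: l, hl => by rw [iterDiff_cons, h l (Nat.succ_inj.1 hl), finDiff_zero]

lemma HasDegreeLT.mono (h : HasDegreeLT n φ) (hnm : n ≤ m) : HasDegreeLT m φ := by
  induction hnm with
  | refl => exact h
  | step _ ih => exact ih.succ

lemma HasDegreeLT.sub (hf : HasDegreeLT n f) (hg : HasDegreeLT n g) : HasDegreeLT n (f - g) :=
  fun l hl => by rw [iterDiff_sub, hf l hl, hg l hl, sub_zero]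

lemma HasDegreeLT.finDiff (h : HasDegreeLT (n + 1) φ) (a : A) :
    HasDegreeLT n (_root_.finDiff a φ) :=
  fun l hl => by
    rw [show _root_.finDiff a φ = iterDiff [a] φ from rfl, ← iterDiff_append]
    exact h _ (by simp [hl])

lemma hasDegreeLT_two (f : A →+ M) : HasDegreeLT 2 f := by
  intro l hl
  match l, hl with
  | [_, _], _ => ext x; simp [iterDiff, finDiff]

lemma isPolynomialMap_iff_exists_hasDegreeLT : IsPolynomialMap φ ↔ ∃ n, HasDegreeLT n φ := by
  constructor
  · rintro (rfl | ⟨n, -, hn⟩)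
    · exact ⟨0, fun l hl => by rw [List.length_eq_zero_iff.1 hl]; rfl⟩
    · exact ⟨n, fun l hl => funext (hn l hl)⟩
  · rintro ⟨n, hn⟩
    exact Or.inr ⟨n + 1, n.succ_pos, fun l hl => congrFun (hn.succ l hl)⟩

end IterDiff

structure IsGroupCompletion {A K : Type} [AddCommMonoid A] [AddCommGroup K] (κ : A → K) : Prop where
  map_add : ∀ a b, κ (a + b) = κ a + κ b
  exists_eq_sub : ∀ z, ∃ a b, z = κ a - κ b
  exists_add_eq_add : ∀ a b, κ a = κ b → ∃ c, a + c = b + c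

namespace IsGroupCompletion

variable {A K G M : Type} [AddCommMonoid A] [AddCommGroup K] [AddCommGroup G] [AddCommGroup M]
  {κ : A → K}

lemma map_zero (hκ : IsGroupCompletion κ) : κ 0 = 0 := by
  simpa using hκ.map_add 0 0

theorem exists_addMonoidHom_apply_eq (hκ : IsGroupCompletion κ) (f : A →+ G) :
    ∃ F : K →+ G, ∀ a, F (κ a) = f a := by
  choose p q hpq using hκ.exists_eq_sub
  have well_defined : ∀ z a b, z = κ a - κ b → f (p z) - f (q z) = f a - f b := by
    intro z a b hz
    obtain ⟨c, hc⟩ := hκ.exists_add_eq_add (p z + b) (a + q z) <| by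
      rw [hκ.map_add, hκ.map_add, ← sub_eq_sub_iff_add_eq_add, ← hpq z, hz]
    rw [sub_eq_sub_iff_add_eq_add, ← f.map_add, ← f.map_add]
    exact add_right_cancel (b := f c) (by rw [← f.map_add, ← f.map_add, hc])
  refine ⟨AddMonoidHom.mk' (fun z => f (p z) - f (q z)) fun z w => ?_, fun a => ?_⟩
  · have hzw : z + w = κ (p z + p w) - κ (q z + q w) := by
      rw [hκ.map_add, hκ.map_add]
      conv_lhs => rw [hpq z, hpq w]
      abel
    rw [well_defined _ _ _ hzw, f.map_add, f.map_add]
    abel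
  · simpa using well_defined (κ a) a 0 (by rw [hκ.map_zero, sub_zero])

theorem eq_zero_of_hasDegreeLT (hκ : IsGroupCompletion κ) {n : ℕ} {ψ : K → M}
    (hψ : HasDegreeLT n ψ) (h : ∀ a, ψ (κ a) = 0) : ψ = 0 := by
  induction n generalizing ψ with
  | zero => exact hψ [] rfl
  | succ n ih =>
    have invariant : ∀ a z, ψ (z + κ a) = ψ z := fun a z =>
      sub_eq_zero.1 <| congrFun (ih (hψ.finDiff (κ a)) fun b => by
        simp [finDiff, ← hκ.map_add, h]) z
    ext z
    obtain ⟨a, b, rfl⟩ := hκ.exists_eq_sub z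
    rw [← invariant b, sub_add_cancel, h, Pi.zero_apply]

theorem ext_of_isPolynomialMap (hκ : IsGroupCompletion κ) {ψ₁ ψ₂ : K → M}
    (h₁ : IsPolynomialMap ψ₁) (h₂ : IsPolynomialMap ψ₂) (h : ∀ a, ψ₁ (κ a) = ψ₂ (κ a)) :
    ψ₁ = ψ₂ := by
  obtain ⟨n₁, hn₁⟩ := isPolynomialMap_iff_exists_hasDegreeLT.1 h₁
  obtain ⟨n₂, hn₂⟩ := isPolynomialMap_iff_exists_hasDegreeLT.1 h₂
  have hsub := (hn₁.mono (le_max_left n₁ n₂)).sub (hn₂.mono (le_max_right n₁ n₂))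
  exact sub_eq_zero.1 (hκ.eq_zero_of_hasDegreeLT hsub fun a => sub_eq_zero.2 (h a))

end IsGroupCompletion

namespace PolynomialMap

variable {A M : Type} [AddCommMonoid A] [AddCommGroup M]

variable (M) in
noncomputable def translate : Multiplicative A →* Module.End ℤ (A → M) where
  toFun a := LinearMap.funLeft ℤ M (· + a.toAdd)
  map_one' := by ext; simp
  map_mul' a b := by ext φ x; simp [add_assoc]

variable (M) in
noncomputable def translateAlg : ℤ[A] →ₐ[ℤ] Module.End ℤ (A → M) :=
  AddMonoidAlgebra.lift ℤ (Module.End ℤ (A → M)) A (translate M)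

lemma translateAlg_of' (a : A) (φ : A → M) (x : A) :
    translateAlg M (AddMonoidAlgebra.of' ℤ A a) φ x = φ (x + a) := by
  rw [translateAlg, AddMonoidAlgebra.lift_of']
  rfl

lemma translateAlg_of'_sub_one (a : A) (φ : A → M) :
    translateAlg M (AddMonoidAlgebra.of' ℤ A a - 1) φ = finDiff a φ := by
  ext x
  rw [map_sub, map_one, LinearMap.sub_apply, Module.End.one_apply, Pi.sub_apply, translateAlg_of']
  rfl

lemma translateAlg_prod_of'_sub_one (l : List A) (φ : A → M) :
    translateAlg M (l.map fun a => AddMonoidAlgebra.of' ℤ A a - 1).prod φ = iterDiff l φ := by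
  induction l with
  | nil => rw [List.map_nil, List.prod_nil, map_one, Module.End.one_apply]; rfl
  | cons a l ih => rw [List.map_cons, List.prod_cons, map_mul, Module.End.mul_apply, ih,
      translateAlg_of'_sub_one, iterDiff_cons]

noncomputable def annihilator (φ : A → M) : Ideal ℤ[A] where
  carrier := {r | translateAlg M r φ = 0}
  add_mem' {r s} hr hs := by simp_all
  zero_mem' := by simp
  smul_mem' c r hr := by simp_all

lemma mem_annihilator {φ : A → M} {r : ℤ[A]} : r ∈ annihilator φ ↔ translateAlg M r φ = 0 :=
  Iff.rfl

variable (A) in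
noncomputable def augmentationIdeal : Ideal ℤ[A] :=
  Ideal.span (Set.range fun a => AddMonoidAlgebra.of' ℤ A a - 1)

lemma of'_sub_one_mem_augmentationIdeal (a : A) :
    AddMonoidAlgebra.of' ℤ A a - 1 ∈ augmentationIdeal A :=
  Ideal.subset_span ⟨a, rfl⟩

lemma augmentationIdeal_pow_le_annihilator {n : ℕ} {φ : A → M} (h : HasDegreeLT n φ) :
    augmentationIdeal A ^ n ≤ annihilator φ := by
  rw [augmentationIdeal, Ideal.span, Submodule.span_pow, Submodule.span_le]
  intro r hr
  obtain ⟨f, hf, rfl⟩ := Set.mem_pow_iff_prod.1 hr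
  choose g hg using hf
  have hprod : ∏ i, f i = ((List.ofFn g).map fun a => AddMonoidAlgebra.of' ℤ A a - 1).prod := by
    simp [List.map_ofFn, List.prod_ofFn, ← hg]
  rw [SetLike.mem_coe, mem_annihilator, hprod, translateAlg_prod_of'_sub_one, h _ (List.length_ofFn)]

noncomputable def quotientEval (φ : A → M) : ℤ[A] ⧸ annihilator φ →+ M :=
  QuotientAddGroup.lift _ (AddMonoidHom.mk' (fun r => translateAlg M r φ 0) fun r s => by simp)
    fun _ hr => congrFun (mem_annihilator.1 hr) 0

lemma quotientEval_mk (φ : A → M) (r : ℤ[A]) :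
    quotientEval φ (Ideal.Quotient.mk _ r) = translateAlg M r φ 0 := rfl

lemma isUnit_mk_of' {n : ℕ} {φ : A → M} (h : HasDegreeLT n φ) (a : A) :
    IsUnit (Ideal.Quotient.mk (annihilator φ) (AddMonoidAlgebra.of' ℤ A a)) := by
  have hnil : IsNilpotent (Ideal.Quotient.mk (annihilator φ) (AddMonoidAlgebra.of' ℤ A a - 1)) := by
    refine ⟨n, ?_⟩
    rw [← map_pow, Ideal.Quotient.eq_zero_iff_mem]
    exact augmentationIdeal_pow_le_annihilator h
      (Ideal.pow_mem_pow (of'_sub_one_mem_augmentationIdeal a) n)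
  simpa using hnil.isUnit_add_one

end PolynomialMap

section NilpotentIdeal

variable {K R M : Type} [AddCommMonoid K] [CommRing R] [AddCommGroup M]

lemma sub_one_mem_of_mul_eq {I : Ideal R} {x y z : R} (hy : IsUnit y) (h : x * y = z)
    (hyI : y - 1 ∈ I) (hzI : z - 1 ∈ I) : x - 1 ∈ I := by
  obtain ⟨u, rfl⟩ := hy
  have hx : x - 1 = ((z - 1) - (u - 1)) * ↑u⁻¹ := by
    rw [← h]
    linear_combination (1 - x) * u.mul_inv
  rw [hx]
  exact I.mul_mem_right _ (I.sub_mem hzI hyI)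

lemma exists_mem_pow_iterDiff_eq (e : R →+ M) {σ : K → R} (hσ : ∀ z w, σ (z + w) = σ z * σ w)
    {I : Ideal R} (hσI : ∀ w, σ w - 1 ∈ I) (l : List K) :
    ∃ c ∈ I ^ l.length, iterDiff l (fun z => e (σ z)) = fun z => e (c * σ z) := by
  induction l with
  | nil => exact ⟨1, by simp, by simp [iterDiff]⟩
  | cons w l ih =>
    obtain ⟨c, hc, h⟩ := ih
    refine ⟨c * (σ w - 1), ?_, ?_⟩
    · rw [List.length_cons, pow_succ]
      exact Ideal.mul_mem_mul hc (hσI w)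
    · ext z
      rw [iterDiff_cons, h]
      simp only [finDiff, hσ, ← map_sub]
      congr 1
      ring

lemma hasDegreeLT_of_sub_one_mem (e : R →+ M) {σ : K → R}
    (hσ : ∀ z w, σ (z + w) = σ z * σ w) {I : Ideal R} (hσI : ∀ w, σ w - 1 ∈ I) {n : ℕ}
    (hIn : I ^ n = ⊥) : HasDegreeLT n fun z => e (σ z) := by
  intro l hl
  obtain ⟨c, hc, h⟩ := exists_mem_pow_iterDiff_eq e hσ hσI l
  rw [hl, hIn, Ideal.mem_bot] at hc
  rw [h, hc]
  ext z
  simp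

end NilpotentIdeal

open PolynomialMap in
theorem IsGroupCompletion.exists_hasDegreeLT_extension {A K M : Type} [AddCommMonoid A]
    [AddCommGroup K] [AddCommGroup M] {κ : A → K} (hκ : IsGroupCompletion κ) {n : ℕ}
    {φ : A → M} (hφ : HasDegreeLT n φ) :
    ∃ φt : K → M, HasDegreeLT n φt ∧ ∀ a, φt (κ a) = φ a := by
  let mk := Ideal.Quotient.mk (annihilator φ)
  let units : Multiplicative A →* (ℤ[A] ⧸ annihilator φ)ˣ :=
    IsUnit.liftRight (mk.toMonoidHom.comp (AddMonoidAlgebra.of ℤ A)) fun a =>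
      isUnit_mk_of' hφ a.toAdd
  obtain ⟨ρ, hρ⟩ := hκ.exists_addMonoidHom_apply_eq (G := Additive (ℤ[A] ⧸ annihilator φ)ˣ)
    (AddMonoidHom.toMultiplicativeLeft.symm units)
  let σ : K → ℤ[A] ⧸ annihilator φ := fun z => (ρ z).toMul
  have hσ_add : ∀ z w, σ (z + w) = σ z * σ w := fun z w => by simp [σ]
  have hσκ : ∀ a, σ (κ a) = mk (AddMonoidAlgebra.of' ℤ A a) := fun a => by
    simp only [σ, hρ]
    rfl
  let P := (augmentationIdeal A).map mk
  have hσκP : ∀ a, σ (κ a) - 1 ∈ P := fun a => by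
    rw [hσκ, ← map_one mk, ← map_sub]
    exact Ideal.mem_map_of_mem _ (of'_sub_one_mem_augmentationIdeal a)
  have hσP : ∀ w, σ w - 1 ∈ P := by
    intro w
    obtain ⟨a, b, rfl⟩ := hκ.exists_eq_sub w
    exact sub_one_mem_of_mul_eq (ρ (κ b)).toMul.isUnit (by rw [← hσ_add, sub_add_cancel])
      (hσκP b) (hσκP a)
  have hPn : P ^ n = ⊥ := by
    rw [← Ideal.map_pow]
    exact Ideal.map_mk_eq_bot_of_le (augmentationIdeal_pow_le_annihilator hφ)
  refine ⟨fun z => quotientEval φ (σ z), hasDegreeLT_of_sub_one_mem _ hσ_add hσP hPn, fun a => ?_⟩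
  show quotientEval φ (σ (κ a)) = φ a
  rw [hσκ, quotientEval_mk, translateAlg_of', zero_add]

/-- Let `φ : A → M` be a polynomial map from a commutative monoid `A` to an
abelian group `M`, and let `κ : A → K` be the group completion
(`K = K₀(A)`: `κ` is additive, every element of `K` is a difference `κ a − κ b`,
and `κ a = κ b` iff `a, b` agree after cancellation).  Then there is a unique
polynomial map `φ̃ : K → M` with `φ̃ ∘ κ = φ`; moreover if `φ` is additive then
so is `φ̃`. -/
theorem polynomial_map_extends_to_group_completion
    (A : Type) [AddCommMonoid A] (M : Type) [AddCommGroup M]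
    (K : Type) [AddCommGroup K] (κ : A → K)
    (hadd : ∀ a b : A, κ (a + b) = κ a + κ b)
    (hgen : ∀ z : K, ∃ a b : A, z = κ a - κ b)
    (hker : ∀ a b : A, κ a = κ b ↔ ∃ c : A, a + c = b + c)
    (φ : A → M) (hφ : IsPolynomialMap φ) :
    (∃! φt : K → M, IsPolynomialMap φt ∧ ∀ a : A, φt (κ a) = φ a) ∧
    ((∀ a b : A, φ (a + b) = φ a + φ b) →
      ∀ φt : K → M, IsPolynomialMap φt → (∀ a : A, φt (κ a) = φ a) →
        ∀ u v : K, φt (u + v) = φt u + φt v) := by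
  have hκ : IsGroupCompletion κ := ⟨hadd, hgen, fun a b => (hker a b).1⟩
  obtain ⟨n, hn⟩ := isPolynomialMap_iff_exists_hasDegreeLT.1 hφ
  obtain ⟨φt, hφt, hφtκ⟩ := hκ.exists_hasDegreeLT_extension hn
  have hφt_poly : IsPolynomialMap φt := isPolynomialMap_iff_exists_hasDegreeLT.2 ⟨n, hφt⟩
  refine ⟨⟨φt, ⟨hφt_poly, hφtκ⟩, fun ψ ⟨hψ, hψκ⟩ => hκ.ext_of_isPolynomialMap hψ hφt_poly
    fun a => (hψκ a).trans (hφtκ a).symm⟩, ?_⟩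
  intro hφ_add ψ hψ hψκ u v
  obtain ⟨ℓ, hℓκ⟩ := hκ.exists_addMonoidHom_apply_eq (AddMonoidHom.mk' φ hφ_add)
  have hψℓ : ψ = ℓ := hκ.ext_of_isPolynomialMap hψ
    (isPolynomialMap_iff_exists_hasDegreeLT.2 ⟨2, hasDegreeLT_two ℓ⟩)
    fun a => (hψκ a).trans (hℓκ a).symm
  rw [hψℓ, map_add]
end

section
/- If φ : A → B and ψ : B → C are polynomial maps of commutative additive monoids of degrees m and n respectively, then ψ ∘ φ is a polynomial map of degree at most mn. -/
/-- A group-valued map is polynomial of degree ≤ `d` if all its `(d+1)`-fold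
iterated finite differences vanish. -/
def PolyDegLE {A M : Type} [AddCommMonoid A] [AddCommGroup M] (φ : A → M) (d : ℕ) : Prop :=
  ∀ l : List A, l.length = d + 1 → ∀ x, iterDiff l φ x = 0

open AddMonoidAlgebra Finset

section GroupRing

noncomputable def linearExt {A N : Type*} [AddCommGroup N] (φ : A → N) : ℤ[A] →+ N :=
  (Finsupp.liftAddHom fun a => zmultiplesHom N (φ a)).comp coeffAddEquiv.toAddMonoidHom

@[simp]
theorem linearExt_single {A N : Type*} [AddCommGroup N] (φ : A → N) (a : A) (k : ℤ) :
    linearExt φ (single a k) = k • φ a :=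
  Finsupp.liftAddHom_apply_single _ a k

def kerIdeal {R N : Type*} [CommRing R] [AddCommGroup N] (g : R →+ N) : Ideal R where
  carrier := {r | ∀ s, g (s * r) = 0}
  add_mem' ha hb s := by simp [mul_add, ha s, hb s]
  zero_mem' s := by simp
  smul_mem' c r hr s := by simpa [mul_assoc] using hr (s * c)

theorem map_eq_zero_of_mem_kerIdeal {R N : Type*} [CommRing R] [AddCommGroup N] {g : R →+ N}
    {r : R} (hr : r ∈ kerIdeal g) : g r = 0 := by
  simpa using hr 1

theorem iterDiff_comp_exponential {A N : Type} {Q : Type*} [AddCommMonoid A] [CommRing Q]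
    [AddCommGroup N] (g : Q →+ N) {u : A → Q} (hu : ∀ x y, u (x + y) = u x * u y)
    (l : List A) (x : A) :
    iterDiff l (fun a => g (u a)) x = g (u x * (l.map fun c => u c - 1).prod) := by
  induction l generalizing x with
  | nil => simp [iterDiff]
  | cons c l ih =>
    change iterDiff l _ (x + c) - iterDiff l _ x = _
    rw [ih, ih, ← map_sub, hu, List.map_cons, List.prod_cons]
    congr 1
    ring

variable {A N : Type} [AddCommMonoid A] [AddCommGroup N]

variable (A) in
noncomputable def augIdeal : Ideal ℤ[A] :=
  Ideal.span (Set.range fun a => single a 1 - 1)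

theorem single_sub_one_mem_augIdeal (a : A) : single a 1 - 1 ∈ augIdeal A :=
  Ideal.subset_span ⟨a, rfl⟩

theorem prod_single_sub_one_mem_augIdeal_pow {ι : Type} (s : Finset ι) (a : ι → A) :
    ∏ i ∈ s, (single (a i) 1 - 1) ∈ augIdeal A ^ #s := by
  simpa using Ideal.prod_mem_prod fun i _ => single_sub_one_mem_augIdeal (a i)

theorem iterDiff_eq_linearExt (φ : A → N) (l : List A) (x : A) :
    iterDiff l φ x = linearExt φ (single x 1 * (l.map fun c => single c 1 - 1).prod) := by
  simpa using iterDiff_comp_exponential (linearExt φ) (u := fun a => single a 1)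
    (by simp [single_mul_single]) l x

open Pointwise in
theorem PolyDegLE.augIdeal_pow_le {φ : A → N} {d : ℕ} (hφ : PolyDegLE φ d) :
    augIdeal A ^ (d + 1) ≤ kerIdeal (linearExt φ) := by
  rw [augIdeal, Submodule.span_pow, Ideal.span_le]
  intro r hr
  obtain ⟨e, rfl⟩ := Set.mem_pow.mp hr
  choose c hc using fun i => (e i).2
  have he : (List.ofFn fun i => (e i : ℤ[A])) = (List.ofFn c).map fun c => single c 1 - 1 := by
    simp [List.map_ofFn, Function.comp_def, hc]
  intro s
  rw [he]
  induction s using AddMonoidAlgebra.induction_on with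
  | of x => rw [of_apply, ← iterDiff_eq_linearExt]; exact hφ _ (by simp) x
  | add s t hs ht => rw [add_mul, map_add, hs, ht, add_zero]
  | smul k s hs => rw [smul_mul_assoc, map_zsmul, hs, smul_zero]

end GroupRing

section GroupCompletion

variable {B M : Type} [AddCommMonoid B] [AddCommGroup M] {κ : B → M}

theorem exists_multiplicative_extension (hadd : ∀ a b, κ (a + b) = κ a + κ b)
    (hgen : ∀ z, ∃ a b, z = κ a - κ b) (hker : ∀ a b, κ a = κ b → ∃ c, a + c = b + c)
    {G : Type*} [CommGroup G] {w : B → G} (hw : ∀ a b, w (a + b) = w a * w b) :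
    ∃ v : M → G, (∀ z z', v (z + z') = v z * v z') ∧ ∀ b, v (κ b) = w b := by
  have hwd : ∀ a b a' b', κ a - κ b = κ a' - κ b' → w a / w b = w a' / w b' := by
    intro a b a' b' h
    obtain ⟨c, hc⟩ := hker (a + b') (a' + b)
      (by rw [hadd, hadd]; exact sub_eq_sub_iff_add_eq_add.mp h)
    have := congrArg w hc
    rw [hw, hw, hw, hw, mul_left_inj] at this
    exact div_eq_div_iff_mul_eq_mul.mpr this
  have hκ0 : κ 0 = 0 := by simpa using hadd 0 0
  have hw0 : w 0 = 1 := by simpa using hw 0 0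
  choose p q hpq using hgen
  refine ⟨fun z => w (p z) / w (q z), fun z z' => ?_, fun b => ?_⟩
  · dsimp only
    rw [hwd _ _ (p z + p z') (q z + q z')
        (by rw [← hpq, hadd, hadd, ← sub_add_sub_comm, ← hpq, ← hpq]),
      hw, hw, div_mul_div_comm]
  · dsimp only
    rw [hwd _ _ b 0 (by rw [← hpq, hκ0, sub_zero]), hw0, div_one]

variable {N : Type} [AddCommGroup N] {f : B → N} {n : ℕ}

theorem PolyDegLE.augIdeal_map_pow_eq_bot (hf : PolyDegLE f n) :
    (augIdeal B).map (Ideal.Quotient.mk (kerIdeal (linearExt f))) ^ (n + 1) = ⊥ := by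
  rw [← Ideal.map_pow, eq_bot_iff, ← Ideal.map_quotient_self (kerIdeal (linearExt f))]
  exact Ideal.map_mono hf.augIdeal_pow_le

theorem PolyDegLE.isUnit_mk_single (hf : PolyDegLE f n) (b : B) :
    IsUnit (Ideal.Quotient.mk (kerIdeal (linearExt f)) (single b 1)) := by
  have : IsNilpotent (Ideal.Quotient.mk (kerIdeal (linearExt f)) (single b 1 - 1)) :=
    ⟨n + 1, by
      rw [← Ideal.mem_bot, ← hf.augIdeal_map_pow_eq_bot]
      exact Ideal.pow_mem_pow (Ideal.mem_map_of_mem _ (single_sub_one_mem_augIdeal b)) _⟩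
  simpa using this.isUnit_one_add

theorem PolyDegLE.exists_extension (hf : PolyDegLE f n) (hadd : ∀ a b, κ (a + b) = κ a + κ b)
    (hgen : ∀ z, ∃ a b, z = κ a - κ b) (hker : ∀ a b, κ a = κ b → ∃ c, a + c = b + c) :
    ∃ f' : M → N, PolyDegLE f' n ∧ ∀ b, f' (κ b) = f b := by
  set K := kerIdeal (linearExt f)
  set π := Ideal.Quotient.mk K
  set J := (augIdeal B).map π
  -- `ℤ[B] ⧸ K` is definitionally the quotient by the additive subgroup underlying `K`.
  let g : ℤ[B] ⧸ K →+ N :=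
    QuotientAddGroup.lift K.toAddSubgroup (linearExt f) fun _ => map_eq_zero_of_mem_kerIdeal
  obtain ⟨v, hv_add, hv_κ⟩ := exists_multiplicative_extension hadd hgen hker
    (w := fun b => (hf.isUnit_mk_single b).unit)
    fun a b => Units.ext (by simp [← map_mul, single_mul_single])
  have hvκ : ∀ b, (v (κ b) : ℤ[B] ⧸ K) = π (single b 1) := fun b => by rw [hv_κ]; rfl
  have hπJ : ∀ b, π (single b 1) - 1 ∈ J := fun b => by
    simpa using Ideal.mem_map_of_mem π (single_sub_one_mem_augIdeal b)
  have hvJ : ∀ z, (v z : ℤ[B] ⧸ K) - 1 ∈ J := by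
    intro z
    obtain ⟨a, b, rfl⟩ := hgen z
    have hv : v (κ a - κ b) = v (κ a) * (v (κ b))⁻¹ :=
      eq_mul_inv_of_mul_eq (by rw [← hv_add, sub_add_cancel])
    have : (v (κ a - κ b) : ℤ[B] ⧸ K) - 1
        = ((π (single a 1) - 1) - (π (single b 1) - 1)) * ↑(v (κ b))⁻¹ := by
      rw [hv, Units.val_mul, sub_sub_sub_cancel_right, ← hvκ, ← hvκ, sub_mul, Units.mul_inv]
    rw [this]
    exact J.mul_mem_right _ (J.sub_mem (hπJ a) (hπJ b))
  refine ⟨fun z => g (v z), fun l hl z => ?_, fun b => ?_⟩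
  · have hprod : (l.map fun c => (v c : ℤ[B] ⧸ K) - 1).prod = 0 := by
      rw [← Fin.prod_univ_fun_getElem, ← Ideal.mem_bot, ← hf.augIdeal_map_pow_eq_bot, ← hl]
      simpa using Ideal.prod_mem_prod (s := univ) fun (i : Fin l.length) _ => hvJ (l.get i)
    rw [iterDiff_comp_exponential g (u := fun z => (v z : ℤ[B] ⧸ K)) (by simp [hv_add]) l z,
      hprod, mul_zero, map_zero]
  · change g (v (κ b)) = f b
    rw [hvκ]
    exact (linearExt_single f b 1).trans (one_smul ℤ (f b))

end GroupCompletion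

section Composition

variable {ι A M N : Type} [AddCommMonoid A] [AddCommGroup M] [AddCommGroup N]

noncomputable def finsetDiff (φ : A → N) (a : ι → A) (U : Finset ι) (x : A) : N :=
  linearExt φ (single x 1 * ∏ i ∈ U, (single (a i) 1 - 1))

theorem iterDiff_eq_finsetDiff (φ : A → N) (l : List A) (x : A) :
    iterDiff l φ x = finsetDiff φ l.get univ x := by
  simp [iterDiff_eq_linearExt, finsetDiff, ← Fin.prod_univ_fun_getElem]

theorem finsetDiff_empty (φ : A → N) (a : ι → A) (x : A) : finsetDiff φ a ∅ x = φ x := by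
  simp [finsetDiff]

theorem sum_powerset_finsetDiff (φ : A → N) (a : ι → A) (S : Finset ι) (x : A) :
    ∑ U ∈ S.powerset, finsetDiff φ a U x = φ (x + ∑ i ∈ S, a i) := by
  simp_rw [finsetDiff, ← map_sum, ← mul_sum, ← prod_add_one, sub_add_cancel, prod_single,
    single_mul_single]
  simp

theorem PolyDegLE.finsetDiff_eq_zero {φ : A → N} {d : ℕ} (hφ : PolyDegLE φ d) (a : ι → A)
    {U : Finset ι} (hU : d + 1 ≤ #U) (x : A) : finsetDiff φ a U x = 0 :=
  hφ.augIdeal_pow_le (Ideal.pow_le_pow_right hU (prod_single_sub_one_mem_augIdeal_pow U a)) _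

theorem sum_neg_one_pow_card_sdiff_of_subset {R : Type*} [CommRing R] [DecidableEq ι]
    {B T : Finset ι} (hBT : B ⊆ T) :
    ∑ S ∈ T.powerset with B ⊆ S, (-1 : R) ^ #(T \ S) = if B = T then 1 else 0 := by
  calc _ = ∑ V ∈ (T \ B).powerset, (-1 : R) ^ #V := by
        refine sum_nbij' (T \ ·) (T \ ·) ?_ ?_ ?_ ?_ fun _ _ => rfl
        · intro S hS
          simp only [mem_filter, mem_powerset] at hS ⊢
          exact sdiff_subset_sdiff subset_rfl hS.2
        · intro V hV
          simp only [mem_filter, mem_powerset] at hV ⊢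
          exact ⟨sdiff_subset, subset_sdiff.mpr ⟨hBT, (sdiff_disjoint.mono_left hV).symm⟩⟩
        · intro S hS
          simp only [mem_filter, mem_powerset] at hS
          exact Finset.sdiff_sdiff_eq_self hS.1
        · intro V hV
          simp only [mem_powerset] at hV
          exact Finset.sdiff_sdiff_eq_self (hV.trans sdiff_subset)
    _ = ((∑ V ∈ (T \ B).powerset, (-1 : ℤ) ^ #V : ℤ) : R) := by push_cast; rfl
    _ = _ := by
        simp only [sum_powerset_neg_one_pow_card, sdiff_eq_empty_iff_subset]
        by_cases h : B = T
        · simp [h]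
        · have hTB : ¬T ⊆ B := fun hTB => h (subset_antisymm hBT hTB)
          simp [h, hTB]

theorem sum_powerset_neg_one_pow_mul_prod_one_add {R : Type*} [CommRing R] [DecidableEq ι]
    (T : Finset ι) (ε : Finset ι → R) :
    ∑ S ∈ T.powerset, (-1 : R) ^ #(T \ S) * ∏ U ∈ S.powerset.erase ∅, (1 + ε U) =
      ∑ 𝒰 ∈ (T.powerset.erase ∅).powerset with 𝒰.biUnion id = T, ∏ U ∈ 𝒰, ε U := by
  simp_rw [prod_one_add, mul_sum]
  rw [sum_comm' (t' := (T.powerset.erase ∅).powerset)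
    (s' := fun 𝒰 => {S ∈ T.powerset | 𝒰.biUnion id ⊆ S}) ?_, sum_filter]
  · refine sum_congr rfl fun 𝒰 h𝒰 => ?_
    have hT : 𝒰.biUnion id ⊆ T := biUnion_subset.mpr fun U hU =>
      mem_powerset.mp (mem_of_mem_erase (mem_powerset.mp h𝒰 hU))
    rw [← sum_mul, sum_neg_one_pow_card_sdiff_of_subset hT, ite_mul, one_mul, zero_mul]
  · intro S 𝒰
    simp only [mem_powerset, mem_filter, subset_iff, mem_erase]
    grind

theorem linearExt_single_comp_mul_prod [DecidableEq ι] (f : A → M) (a : ι → A) (T : Finset ι)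
    (x : A) :
    linearExt (fun y => single (f y) (1 : ℤ)) (single x 1 * ∏ i ∈ T, (single (a i) 1 - 1)) =
      single (f x) 1 * ∑ 𝒰 ∈ (T.powerset.erase ∅).powerset with 𝒰.biUnion id = T,
        ∏ U ∈ 𝒰, (single (finsetDiff f a U x) 1 - 1) := by
  set F := linearExt fun y => single (f y) (1 : ℤ)
  have hexpand : single x 1 * ∏ i ∈ T, (single (a i) (1 : ℤ) - 1) =
      ∑ S ∈ T.powerset, (-1) ^ #(T \ S) * single (x + ∑ i ∈ S, a i) 1 := by
    simp_rw [sub_eq_add_neg, prod_add, prod_single, prod_const, mul_sum, mul_comm, ← mul_assoc,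
      single_mul_single]
    simp
  have hsign : ∀ (k : ℕ) (r : ℤ[A]), F ((-1) ^ k * r) = (-1) ^ k * F r := fun k r => by
    rcases Nat.even_or_odd k with hk | hk <;> simp [hk.neg_one_pow]
  have hmoebius : ∀ S : Finset ι, single (f (x + ∑ i ∈ S, a i)) (1 : ℤ) =
      single (f x) 1 * ∏ U ∈ S.powerset.erase ∅, (1 + (single (finsetDiff f a U x) 1 - 1)) := by
    intro S
    rw [← sum_powerset_finsetDiff f a S x, ← add_sum_erase _ _ (empty_mem_powerset S),
      finsetDiff_empty, prod_congr rfl fun U _ => add_sub_cancel _ _, prod_single,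
      prod_const_one, single_mul_single, one_mul]
  rw [hexpand, map_sum, ← sum_powerset_neg_one_pow_mul_prod_one_add, mul_sum]
  refine sum_congr rfl fun S _ => ?_
  rw [hsign]
  simp only [F, linearExt_single, one_smul]
  rw [hmoebius, mul_left_comm]

theorem PolyDegLE.comp {f : A → M} {h : M → N} {m n : ℕ} (hf : PolyDegLE f m)
    (hh : PolyDegLE h n) : PolyDegLE (fun x => h (f x)) (m * n) := by
  classical
  intro l hl x
  have hlin : linearExt (fun y => h (f y)) =
      (linearExt h).comp (linearExt fun y => single (f y) (1 : ℤ)) :=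
    addMonoidHom_ext fun y k => by simp
  rw [iterDiff_eq_finsetDiff, finsetDiff, hlin, AddMonoidHom.comp_apply,
    linearExt_single_comp_mul_prod, mul_sum, map_sum]
  refine sum_eq_zero fun 𝒰 h𝒰 => ?_
  rw [mem_filter] at h𝒰
  by_cases hlarge : ∃ U ∈ 𝒰, m + 1 ≤ #U
  · obtain ⟨U, hU, hmU⟩ := hlarge
    rw [prod_eq_zero hU (by rw [hf.finsetDiff_eq_zero _ hmU, ← one_def, sub_self]), mul_zero,
      map_zero]
  · push Not at hlarge
    have hcard : n + 1 ≤ #𝒰 := by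
      have := card_biUnion_le_card_mul 𝒰 id m fun U hU => Nat.lt_succ_iff.mp (hlarge U hU)
      rw [h𝒰.2, card_univ, Fintype.card_fin] at this
      by_contra! h
      nlinarith
    exact hh.augIdeal_pow_le
      (Ideal.pow_le_pow_right hcard (prod_single_sub_one_mem_augIdeal_pow _ _)) _

end Composition

theorem polynomial_composition_degree_general
    (A : Type) [AddCommMonoid A] (B : Type) [AddCommMonoid B] (C : Type)
    (M : Type) [AddCommGroup M] (κB : B → M)
    (hBadd : ∀ a b : B, κB (a + b) = κB a + κB b)
    (hBgen : ∀ z : M, ∃ a b : B, z = κB a - κB b)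
    (hBker : ∀ a b : B, κB a = κB b ↔ ∃ c : B, a + c = b + c)
    (N : Type) [AddCommGroup N] (κC : C → N)
    (φ : A → B) (ψ : B → C) (m n : ℕ)
    (hφ : PolyDegLE (fun x => κB (φ x)) m)
    (hψ : PolyDegLE (fun y => κC (ψ y)) n) :
    PolyDegLE (fun x => κC (ψ (φ x))) (m * n) := by
  obtain ⟨ψ', hψ', hψ'κ⟩ := hψ.exists_extension hBadd hBgen fun a b => (hBker a b).mp
  simpa only [hψ'κ] using hφ.comp hψ'

/-- If `φ : A → B` and `ψ : B → C` are polynomial maps of commutative monoids of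
degrees (at most) `m` and `n` respectively — polynomiality being measured after
composing with the group-completion maps `κ_B : B → K₀(B)` and
`κ_C : C → K₀(C)` — then `ψ ∘ φ` is polynomial of degree at most `m * n`. -/
theorem polynomial_composition_degree
    (A : Type) [AddCommMonoid A] (B : Type) [AddCommMonoid B] (C : Type) [AddCommMonoid C]
    (M : Type) [AddCommGroup M] (κB : B → M)
    (hBadd : ∀ a b : B, κB (a + b) = κB a + κB b)
    (hBgen : ∀ z : M, ∃ a b : B, z = κB a - κB b)
    (hBker : ∀ a b : B, κB a = κB b ↔ ∃ c : B, a + c = b + c)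
    (N : Type) [AddCommGroup N] (κC : C → N)
    (hCadd : ∀ a b : C, κC (a + b) = κC a + κC b)
    (hCgen : ∀ z : N, ∃ a b : C, z = κC a - κC b)
    (hCker : ∀ a b : C, κC a = κC b ↔ ∃ c : C, a + c = b + c)
    (φ : A → B) (ψ : B → C) (m n : ℕ)
    (hφ : PolyDegLE (fun x => κB (φ x)) m)
    (hψ : PolyDegLE (fun y => κC (ψ y)) n) :
    PolyDegLE (fun x => κC (ψ (φ x))) (m * n) :=
  polynomial_composition_degree_general A B C M κB hBadd hBgen hBker N κC φ ψ m n hφ hψ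
end

section
/- Let G be a finite group and A the semi-Burnside functor assigning to each finite G-set X the set A(X) of isomorphism classes of finite G-sets over X, with A*(f) induced by pullback, A₊(f) by postcomposition, and A•(f) by the dependent product Π_f. Then for any G-map f : X → Y and any object (A, a) of G-Set/X, with exponential diagram (X ← A ← X×_Y Π_f(A); Y ← Π_f(A)), the identity A₊(π) ∘ A•(f′) ∘ A*(ρ) = A•(f) ∘ A₊(a) holds in maps A(A) → A(Y), where ρ : X×_Y Π_f(A) → A is evaluation, f′ : X×_Y Π_f(A) → Π_f(A) the projection, and π : Π_f(A) → Y the structure map. -/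
/-- The dependent product `Π_f(A, a)`: pairs `(y, σ)` of `y : Y` and a section
`σ : f⁻¹(y) → A` of `a` over the fiber. -/
def PiSec {X Y A : Type} (f : X → Y) (a : A → X) : Type :=
  Σ y : Y, {σ : {x : X // f x = y} → A // ∀ x, a (σ x) = x.1}

/-- The relation expressing `p' = g • p` for the canonical `G`-action
`g • (y, σ) = (g • y, x ↦ g • σ (g⁻¹ • x))` on `Π_f(A, a)`. -/
def PiRel {G X Y A : Type} [Group G] [MulAction G X] [MulAction G Y] [MulAction G A]
    (f : X → Y) (a : A → X) (g : G) (p p' : PiSec f a) : Prop :=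
  p'.1 = g • p.1 ∧
    ∀ (x : X) (hx : f x = p'.1) (hx' : f (g⁻¹ • x) = p.1),
      p'.2.1 ⟨x, hx⟩ = g • p.2.1 ⟨g⁻¹ • x, hx'⟩

/-- The fibered product `E = X ×_Y Π_f(A, a)`. -/
def ExpE {X Y A : Type} (f : X → Y) (a : A → X) : Type :=
  {q : X × PiSec f a // f q.1 = q.2.1}

/-- The evaluation map `ρ : X ×_Y Π_f(A) → A`, `(x, (y, σ)) ↦ σ(x)`. -/
def expRho {X Y A : Type} (f : X → Y) (a : A → X) : ExpE f a → A :=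
  fun q => q.1.2.2.1 ⟨q.1.1, q.2⟩

/-- The projection `f' : X ×_Y Π_f(A) → Π_f(A)`. -/
def expPrj {X Y A : Type} (f : X → Y) (a : A → X) : ExpE f a → PiSec f a :=
  fun q => q.1.2

/-- The relation expressing `e' = g • e` on `E = X ×_Y Π_f(A)`. -/
def ERel {G X Y A : Type} [Group G] [MulAction G X] [MulAction G Y] [MulAction G A]
    (f : X → Y) (a : A → X) (g : G) (e e' : ExpE f a) : Prop :=
  e'.1.1 = g • e.1.1 ∧ PiRel f a g e.1.2 e'.1.2

/-- The pullback `C = ρ*(B, b) = E ×_A B` of `b : B → A` along `ρ`. -/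
def PullC {X Y A B : Type} (f : X → Y) (a : A → X) (b : B → A) : Type :=
  {p : ExpE f a × B // expRho f a p.1 = b p.2}

/-- The relation expressing `c' = g • c` on `C = E ×_A B`. -/
def CRel {G X Y A B : Type} [Group G] [MulAction G X] [MulAction G Y] [MulAction G A]
    [MulAction G B] (f : X → Y) (a : A → X) (b : B → A) (g : G)
    (c c' : PullC f a b) : Prop :=
  ERel f a g c.1.1 c'.1.1 ∧ c'.1.2 = g • c.1.2

/-- `R = Π_{f'}(C, c)`, the dependent product over `P = Π_f(A)` of the pullback
`C → E` along the projection `f' : E → P`; its structure map to `Y` is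
`r ↦ π(r.1)`. -/
def RType {X Y A B : Type} (f : X → Y) (a : A → X) (b : B → A) : Type :=
  PiSec (expPrj f a) (fun c : PullC f a b => c.1.1)

/-- The relation expressing `r' = g • r` on `R = Π_{f'}(C)`. -/
def RRel {G X Y A B : Type} [Group G] [MulAction G X] [MulAction G Y] [MulAction G A]
    [MulAction G B] (f : X → Y) (a : A → X) (b : B → A) (g : G)
    (r r' : RType f a b) : Prop :=
  PiRel f a g r.1 r'.1 ∧
    ∀ (e : ExpE f a) (he : expPrj f a e = r'.1)
      (e₀ : ExpE f a) (he₀ : expPrj f a e₀ = r.1),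
      ERel f a g e₀ e → CRel f a b g (r.2.1 ⟨e₀, he₀⟩) (r'.2.1 ⟨e, he⟩)

theorem PiSec.ext' {X Y A : Type} {f : X → Y} {a : A → X}
    {l l' : PiSec f a} (h1 : l.1 = l'.1)
    (h2 : ∀ (x : X) (hx : f x = l.1) (hx' : f x = l'.1),
      l.2.1 ⟨x, hx⟩ = l'.2.1 ⟨x, hx'⟩) : l = l' := by
  obtain ⟨y, σ, hσ⟩ := l
  obtain ⟨y', σ', hσ'⟩ := l'
  cases h1
  have hss : σ = σ' := funext fun x => h2 x.1 x.2 x.2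
  cases hss
  rfl

theorem RType.ext' {X Y A B : Type} {f : X → Y} {a : A → X} {b : B → A}
    {r r' : RType f a b} (h1 : r.1 = r'.1)
    (h2 : ∀ (e : ExpE f a) (he : expPrj f a e = r.1) (he' : expPrj f a e = r'.1),
      (r.2.1 ⟨e, he⟩).1.2 = (r'.2.1 ⟨e, he'⟩).1.2) : r = r' := by
  obtain ⟨p, τ, hτ⟩ := r
  obtain ⟨p', τ', hτ'⟩ := r'
  cases h1
  have hss : τ = τ' := funext fun e => by
    have hB := h2 e.1 e.2 e.2
    apply Subtype.ext
    apply Prod.ext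
    · exact (hτ ⟨e.1, e.2⟩).trans (hτ' ⟨e.1, e.2⟩).symm
    · exact hB
  cases hss
  rfl

def distToFun {X Y A B : Type} (f : X → Y) (a : A → X) (b : B → A)
    (l : PiSec f (fun β : B => a (b β))) : RType f a b :=
  ⟨⟨l.1, ⟨fun x => b (l.2.1 x), fun x => l.2.2 x⟩⟩,
   ⟨fun e =>
      ⟨⟨e.1, l.2.1 ⟨e.1.1.1, e.1.2.trans (congrArg Sigma.fst e.2)⟩⟩, by
        obtain ⟨⟨⟨x, p'⟩, hx⟩, he⟩ := e
        have h : p' = ⟨l.1, ⟨fun x => b (l.2.1 x), fun x => l.2.2 x⟩⟩ := he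
        subst h
        rfl⟩,
    fun e => rfl⟩⟩

def distInvFun {X Y A B : Type} (f : X → Y) (a : A → X) (b : B → A)
    (r : RType f a b) : PiSec f (fun β : B => a (b β)) :=
  ⟨r.1.1, ⟨fun x => (r.2.1 ⟨⟨⟨x.1, r.1⟩, x.2⟩, rfl⟩).1.2,
    fun x => by
      have hc := (r.2.1 ⟨⟨⟨x.1, r.1⟩, x.2⟩, rfl⟩).2
      have hE := r.2.2 ⟨⟨⟨x.1, r.1⟩, x.2⟩, rfl⟩
      simp only [] at hE
      rw [show ((r.2.1 ⟨⟨⟨x.1, r.1⟩, x.2⟩, rfl⟩).1.1 : ExpE f a) = ⟨⟨x.1, r.1⟩, x.2⟩ from hE] at hc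
      show a (b ((r.2.1 ⟨⟨⟨x.1, r.1⟩, x.2⟩, rfl⟩).1.2)) = x.1
      rw [← hc]
      exact r.1.2.2 ⟨x.1, x.2⟩⟩⟩

example {X Y A B : Type} (f : X → Y) (a : A → X) (b : B → A)
    (l : PiSec f (fun β : B => a (b β))) : distInvFun f a b (distToFun f a b l) = l := rfl
theorem dist_right {X Y A B : Type} (f : X → Y) (a : A → X) (b : B → A)
    (r : RType f a b) : distToFun f a b (distInvFun f a b r) = r := by
  apply RType.ext'
  · apply PiSec.ext'
    · rfl
    · intro x hx hx'
      show b ((r.2.1 ⟨⟨⟨x, r.1⟩, hx⟩, rfl⟩).1.2) = r.1.2.1 ⟨x, hx'⟩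
      have hc := (r.2.1 ⟨⟨⟨x, r.1⟩, hx⟩, rfl⟩).2
      have hE := r.2.2 ⟨⟨⟨x, r.1⟩, hx⟩, rfl⟩
      rw [show ((r.2.1 ⟨⟨⟨x, r.1⟩, hx⟩, rfl⟩).1.1 : ExpE f a) = ⟨⟨x, r.1⟩, hx⟩ from hE] at hc
      exact hc.symm
  · intro e he he'
    have h2' := congrArg Sigma.fst he
    have hpf : f e.1.1 = r.1.1 := e.2.trans h2'
    show (r.2.1 ⟨⟨⟨e.1.1, r.1⟩, hpf⟩, rfl⟩).1.2 = (r.2.1 ⟨e, he'⟩).1.2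
    have key : (⟨⟨⟨e.1.1, r.1⟩, hpf⟩, rfl⟩ :
        {e : ExpE f a // expPrj f a e = r.1}) = ⟨e, he'⟩ := by
      apply Subtype.ext
      apply Subtype.ext
      exact Prod.ext rfl he'.symm
    rw [key]
/-- Tambara-functor distributivity for the semi-Burnside functor of a finite
group `G`: for a `G`-map `f : X → Y`, an object `(A, a)` of `G-Set/X` with
exponential diagram `(X ← A ← X ×_Y Π_f(A); Y ← Π_f(A))`, and any object
`(B, b)` of `G-Set/A`, the identity `A₊(π) ∘ A•(f') ∘ A*(ρ) = A•(f) ∘ A₊(a)`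
holds on the class of `(B, b)`: there is a `G`-equivariant bijection
`Π_f(B, a∘b) ≃ Π_{f'}(ρ*(B, b))` commuting with the structure maps to `Y`
(the right-hand side mapping to `Y` through `π : Π_f(A) → Y`).  Equivariance
is expressed via the action relations `PiRel`/`RRel`. -/
theorem semiBurnside_distributivity
    (G : Type) [Group G] [Finite G]
    (X : Type) [Finite X] [MulAction G X] (Y : Type) [Finite Y] [MulAction G Y]
    (f : X → Y) (hf : ∀ (g : G) (x : X), f (g • x) = g • f x)
    (A : Type) [Finite A] [MulAction G A]
    (a : A → X) (ha : ∀ (g : G) (p : A), a (g • p) = g • a p)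
    (B : Type) [Finite B] [MulAction G B]
    (b : B → A) (hb : ∀ (g : G) (β : B), b (g • β) = g • b β) :
    ∃ Φ : PiSec f (fun β : B => a (b β)) ≃ RType f a b,
      (∀ l, (Φ l).1.1 = l.1) ∧
      ∀ (g : G) (l l' : PiSec f (fun β : B => a (b β))),
        PiRel f (fun β : B => a (b β)) g l l' → RRel f a b g (Φ l) (Φ l') := by
  refine ⟨Equiv.ofBijective (distToFun f a b)
    ⟨Function.LeftInverse.injective (g := distInvFun f a b) (fun l => rfl),
     fun r => ⟨distInvFun f a b r, dist_right f a b r⟩⟩, fun l => rfl, ?_⟩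
  intro g l l' hl
  constructor
  · constructor
    · exact hl.1
    · intro x hx hx'
      show b (l'.2.1 ⟨x, hx⟩) = g • b (l.2.1 ⟨g⁻¹ • x, hx'⟩)
      rw [hl.2 x hx hx', hb]
  · intro e he e₀ he₀ hER
    refine ⟨hER, ?_⟩
    have h2' := congrArg Sigma.fst he
    have hx : f e.1.1 = l'.1 := e.2.trans h2'
    have h2₀ := congrArg Sigma.fst he₀
    have hx₀ : f e₀.1.1 = l.1 := e₀.2.trans h2₀
    have hx' : f (g⁻¹ • e.1.1) = l.1 := by
      rw [hf, hx, hl.1, inv_smul_smul]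
    show l'.2.1 ⟨e.1.1, hx⟩ = g • l.2.1 ⟨e₀.1.1, hx₀⟩
    rw [show (⟨e₀.1.1, hx₀⟩ : {x : X // f x = l.1}) = ⟨g⁻¹ • e.1.1, hx'⟩ from
      Subtype.ext (eq_inv_smul_iff.mpr hER.1.symm)]
    exact hl.2 e.1.1 hx hx'
end

section
/- Let G, H be finite groups, X a finite G-set, Y a finite H-set, and (α, θ) : (X, G) → (Y, H) a 1-cell (α : X → Y a map, θ_x : G → H satisfying α(gx) = θ_x(g)α(x) and θ_x(gg') = θ_{g'x}(g)θ_x(g')). For any finite H-set B over Y via b : B → Y, the set X ×_Y B = {(x, β) | α(x) = b(β)} carries a well-defined G-action g·(x, β) = (gx, θ_x(g)·β), and the projection to X is G-equivariant; this assignment defines a functor (α,θ)* : H-Set/Y → G-Set/X. -/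
/-- Let `G, H` be finite groups, `X` a finite `G`-set, `Y` a finite `H`-set,
and `(α, θ) : (X, G) → (Y, H)` a 1-cell: `α : X → Y` with
`α (g • x) = θ x g • α x` and `θ x (g g') = θ (g' • x) g * θ x g'`.  For any
finite `H`-set `(B, b)` over `Y`, the set `X ×_Y B = {(x, β) | α x = b β}`
carries a well-defined `G`-action `g • (x, β) = (g • x, θ x g • β)` (the
formula preserves the defining condition and satisfies the unit and
composition laws), the projection to `X` is `G`-equivariant (it is the first
projection), and the assignment is functorial: every morphism `φ : (B, b) →
(B', b')` in `H-Set/Y` induces a morphism of the pullbacks over `X` commuting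
with the twisted `G`-actions. -/
theorem onecell_pullback_functor
    (G H : Type) [Group G] [Group H] [Finite G] [Finite H]
    (X : Type) [Finite X] [MulAction G X] (Y : Type) [Finite Y] [MulAction H Y]
    (α : X → Y) (θ : X → G → H)
    (hαθ : ∀ (g : G) (x : X), α (g • x) = θ x g • α x)
    (hθ : ∀ (x : X) (g g' : G), θ x (g * g') = θ (g' • x) g * θ x g')
    (B : Type) [Finite B] [MulAction H B]
    (b : B → Y) (hb : ∀ (h : H) (β : B), b (h • β) = h • b β) :
    (∀ (g : G) (p : {p : X × B // α p.1 = b p.2}),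
        α (g • p.1.1) = b (θ p.1.1 g • p.1.2)) ∧
    (∀ p : X × B, ((1 : G) • p.1, θ p.1 1 • p.2) = p) ∧
    (∀ (g g' : G) (p : X × B),
        ((g * g') • p.1, θ p.1 (g * g') • p.2) =
          (g • (g' • p.1), θ (g' • p.1) g • (θ p.1 g' • p.2))) ∧
    (∀ (B' : Type) [MulAction H B'] (b' : B' → Y),
        (∀ (h : H) (β' : B'), b' (h • β') = h • b' β') →
        ∀ (φ : B → B'), (∀ (h : H) (β : B), φ (h • β) = h • φ β) →
        (∀ β, b' (φ β) = b β) →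
        (∀ p : {p : X × B // α p.1 = b p.2}, α p.1.1 = b' (φ p.1.2)) ∧
        ∀ (g : G) (p : X × B), φ (θ p.1 g • p.2) = θ p.1 g • φ p.2) := by
  have hθ1 : ∀ x : X, θ x 1 = 1 := by
    intro x
    have := hθ x 1 1
    simp only [one_mul, one_smul] at this
    have := mul_right_cancel (a := θ x 1) (b := θ x 1) (c := 1) (by rw [one_mul, ← this])
    exact this
  refine ⟨?_, ?_, ?_, ?_⟩
  · intro g p
    rw [hαθ, hb, p.2]
  · intro p
    simp [hθ1]
  · intro g g' p
    simp [hθ, mul_smul]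
  · intro B' _ b' hb' φ hφ hφb
    exact ⟨fun p => by rw [p.2, hφb], fun g p => hφ _ _⟩
end

section
/- Let G, H be finite groups, X a finite G-set, Y a finite H-set, and (α, θ) : (X, G) → (Y, H) a stab-surjective 1-cell, meaning (i) Y = H·α(X) and (ii) whenever h·α(x) = h'·α(x') there exists g ∈ G with x' = gx and h = h'·θ_x(g). Then the pullback functor (α,θ)* : H-Set/Y → G-Set/X (given by B ↦ X ×_Y B with twisted G-action g(x,β) = (gx, θ_x(g)β)) is fully faithful. -/
/-- Let `(α, θ) : (X, G) → (Y, H)` be a stab-surjective 1-cell between finite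
sets with finite group actions: `Y = H • α(X)`, and whenever
`h • α x = h' • α x'` there is `g ∈ G` with `x' = g • x` and `h = h' * θ x g`.
Then the pullback functor `(α, θ)* : H-Set/Y → G-Set/X`, `(B, b) ↦ X ×_Y B`
with the twisted action `g • (x, β) = (g • x, θ x g • β)`, is fully faithful:
for all `(B, b)`, `(B', b')`, every `G`-map over `X` between the pullbacks
comes from a unique `H`-map `(B, b) → (B', b')` over `Y`. -/
theorem stabsurjective_pullback_fully_faithful
    (G H : Type) [Group G] [Group H] [Finite G] [Finite H]
    (X : Type) [Finite X] [MulAction G X] (Y : Type) [Finite Y] [MulAction H Y]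
    (α : X → Y) (θ : X → G → H)
    (hαθ : ∀ (g : G) (x : X), α (g • x) = θ x g • α x)
    (hθ : ∀ (x : X) (g g' : G), θ x (g * g') = θ (g' • x) g * θ x g')
    (hsurj : ∀ y : Y, ∃ (h : H) (x : X), y = h • α x)
    (hstab : ∀ (x x' : X) (h h' : H), h • α x = h' • α x' →
      ∃ g : G, x' = g • x ∧ h = h' * θ x g)
    (B : Type) [Finite B] [MulAction H B]
    (b : B → Y) (hb : ∀ (h : H) (β : B), b (h • β) = h • b β)
    (B' : Type) [Finite B'] [MulAction H B']
    (b' : B' → Y) (hb' : ∀ (h : H) (β' : B'), b' (h • β') = h • b' β') :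
    ∀ ψ : {p : X × B // α p.1 = b p.2} → {p : X × B' // α p.1 = b' p.2},
      (∀ p, (ψ p).1.1 = p.1.1) →
      (∀ (g : G) (p : {p : X × B // α p.1 = b p.2})
          (hp : α (g • p.1.1) = b (θ p.1.1 g • p.1.2)),
        (ψ ⟨(g • p.1.1, θ p.1.1 g • p.1.2), hp⟩).1.2 = θ p.1.1 g • (ψ p).1.2) →
      ∃! φ : B → B',
        ((∀ (h : H) (β : B), φ (h • β) = h • φ β) ∧ ∀ β, b' (φ β) = b β) ∧
          ∀ p : {p : X × B // α p.1 = b p.2}, (ψ p).1.2 = φ p.1.2 := by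
  intro ψ hψ1 hψ2
  classical
  have pf : ∀ (β : B) (h : H) (x : X), b β = h • α x → α x = b (h⁻¹ • β) := by
    intro β h x hx
    rw [hb, hx, inv_smul_smul]
  have key : ∀ (β : B) (h : H) (x : X) (hx : b β = h • α x) (h' : H) (x' : X)
      (hx' : b β = h' • α x'),
      h • (ψ ⟨(x, h⁻¹ • β), pf β h x hx⟩).1.2
        = h' • (ψ ⟨(x', h'⁻¹ • β), pf β h' x' hx'⟩).1.2 := by
    intro β h x hx h' x' hx'
    obtain ⟨g, hg1, hg2⟩ := hstab x x' h h' (by rw [← hx, ← hx'])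
    have hp : α (g • x) = b (θ x g • (h⁻¹ • β)) := by
      rw [hαθ, hb, ← pf β h x hx]
    have heq : (⟨(g • x, θ x g • (h⁻¹ • β)), hp⟩ : {p : X × B // α p.1 = b p.2})
        = ⟨(x', h'⁻¹ • β), pf β h' x' hx'⟩ := by
      apply Subtype.ext
      apply Prod.ext
      · exact hg1.symm
      · show θ x g • h⁻¹ • β = h'⁻¹ • β
        rw [smul_smul]
        congr 1
        rw [hg2]
        group
    have := hψ2 g ⟨(x, h⁻¹ • β), pf β h x hx⟩ hp
    rw [heq] at this
    rw [this, smul_smul, ← hg2]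
  choose hh xx hbx using hsurj
  set φ : B → B' := fun β =>
    hh (b β) • (ψ ⟨(xx (b β), (hh (b β))⁻¹ • β), pf β _ _ (hbx (b β))⟩).1.2 with hφ
  have hval : ∀ (β : B) (h : H) (x : X) (hx : b β = h • α x),
      φ β = h • (ψ ⟨(x, h⁻¹ • β), pf β h x hx⟩).1.2 := by
    intro β h x hx
    exact key β (hh (b β)) (xx (b β)) (hbx (b β)) h x hx
  have hcompat : ∀ p : {p : X × B // α p.1 = b p.2}, (ψ p).1.2 = φ p.1.2 := by
    intro p
    have hx : b p.1.2 = (1 : H) • α p.1.1 := by rw [one_smul, p.2]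
    have hpe : (⟨(p.1.1, (1 : H)⁻¹ • p.1.2), pf p.1.2 1 p.1.1 hx⟩ :
        {p : X × B // α p.1 = b p.2}) = p := by
      apply Subtype.ext
      apply Prod.ext
      · rfl
      · show (1 : H)⁻¹ • p.1.2 = p.1.2
        rw [inv_one, one_smul]
    rw [hval p.1.2 1 p.1.1 hx, hpe, one_smul]
  have hequiv : ∀ (h : H) (β : B), φ (h • β) = h • φ β := by
    intro k β
    have hx : b (k • β) = (k * hh (b β)) • α (xx (b β)) := by
      conv_lhs => rw [hb, hbx (b β)]
      rw [smul_smul]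
    have hpe : (⟨(xx (b β), (k * hh (b β))⁻¹ • (k • β)), pf (k • β) _ _ hx⟩ :
        {p : X × B // α p.1 = b p.2})
        = ⟨(xx (b β), (hh (b β))⁻¹ • β), pf β _ _ (hbx (b β))⟩ := by
      apply Subtype.ext
      apply Prod.ext
      · rfl
      · show (k * hh (b β))⁻¹ • k • β = (hh (b β))⁻¹ • β
        rw [smul_smul]
        congr 1
        group
    rw [hval (k • β) (k * hh (b β)) (xx (b β)) hx, hpe, mul_smul]
  have hover : ∀ β, b' (φ β) = b β := by
    intro β
    have h2 := (ψ ⟨(xx (b β), (hh (b β))⁻¹ • β), pf β _ _ (hbx (b β))⟩).2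
    rw [hψ1] at h2
    show b' (hh (b β) • _) = b β
    rw [hb', ← h2]
    exact (hbx (b β)).symm
  refine ⟨φ, ⟨⟨hequiv, hover⟩, hcompat⟩, ?_⟩
  rintro φ' ⟨⟨hequiv', _⟩, hcompat'⟩
  funext β
  have hx := hbx (b β)
  have h1 : φ' β = hh (b β) • φ' ((hh (b β))⁻¹ • β) := by
    rw [← hequiv', smul_inv_smul]
  rw [h1, hval β (hh (b β)) (xx (b β)) hx]
  exact congrArg _ (hcompat' ⟨(xx (b β), (hh (b β))⁻¹ • β), pf β _ _ hx⟩).symm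
end

section
/- Let G, H be finite groups, X a finite G-set, and (α, θ) : (X, G) → (Y, H) a 1-cell with Y a finite H-set. Let SIm(α,θ) = (H × X)/∼ be the stabilizerwise image, where (η,x) ∼ (η',x') iff there exists g with x' = gx and η = η'θ_x(g), and define the map α̃ : SIm(α,θ) → Y, [η, x] ↦ η·α(x). Then α̃ is a well-defined H-equivariant map, and the map υ : X → SIm(α,θ), x ↦ [e,x], together with θ defines a stab-surjective 1-cell through which (α,θ) factors as α = α̃ ∘ υ with θ unchanged. -/
/-- The relation on `H × X` defining the stabilizerwise image
`SIm(α, θ) = (H × X)/∼` of a 1-cell `(α, θ) : (X, G) → (Y, H)`: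
`(η, x) ∼ (η', x')` iff there is `g ∈ G` with `x' = g • x` and
`η = η' * θ x g`. -/
def simRel {G H X : Type} [Group G] [Group H] [MulAction G X] (θ : X → G → H) :
    H × X → H × X → Prop :=
  fun p q => ∃ g : G, q.2 = g • p.2 ∧ p.1 = q.1 * θ p.2 g

/-- SIm-factorization of a 1-cell `(α, θ) : (X, G) → (Y, H)` between finite
sets with finite group actions.  On the stabilizerwise image
`SIm(α, θ) = (H × X)/∼` (with `H`-action `h • [η, x] = [h η, x]`):
the map `α̃ : [η, x] ↦ η • α x` is well defined and `H`-equivariant;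
`υ : x ↦ [e, x]` together with `θ` is a 1-cell (`υ (g • x) = θ x g • υ x`)
through which `(α, θ)` factors as `α = α̃ ∘ υ`; and `(υ, θ)` is
stab-surjective: every class is of the form `h • [e, x] = [h, x]`, and
`[h, x] = [h', x']` forces `∃ g, x' = g • x ∧ h = h' * θ x g`. -/
theorem sim_factorization
    (G H : Type) [Group G] [Group H] [Finite G] [Finite H]
    (X : Type) [Finite X] [MulAction G X] (Y : Type) [Finite Y] [MulAction H Y]
    (α : X → Y) (θ : X → G → H)
    (hαθ : ∀ (g : G) (x : X), α (g • x) = θ x g • α x)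
    (hθ : ∀ (x : X) (g g' : G), θ x (g * g') = θ (g' • x) g * θ x g') :
    (∃ tilde : Quot (simRel θ) → Y,
        (∀ (η : H) (x : X), tilde (Quot.mk (simRel θ) (η, x)) = η • α x) ∧
        (∀ (h η : H) (x : X),
          tilde (Quot.mk (simRel θ) (h * η, x)) =
            h • tilde (Quot.mk (simRel θ) (η, x))) ∧
        ∀ x : X, tilde (Quot.mk (simRel θ) (1, x)) = α x) ∧
    (∀ (g : G) (x : X),
        Quot.mk (simRel θ) ((1 : H), g • x) = Quot.mk (simRel θ) (θ x g, x)) ∧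
    (∀ q : Quot (simRel θ), ∃ (h : H) (x : X), q = Quot.mk (simRel θ) (h, x)) ∧
    (∀ (h h' : H) (x x' : X),
        Quot.mk (simRel θ) (h, x) = Quot.mk (simRel θ) (h', x') →
        ∃ g : G, x' = g • x ∧ h = h' * θ x g) := by
  have hθ1 : ∀ x : X, θ x 1 = 1 := by
    intro x
    have := hθ x 1 1
    simp only [one_smul, mul_one] at this
    exact (mul_eq_left.mp this.symm)
  have hinv : ∀ (g : G) (x : X), θ (g • x) g⁻¹ = (θ x g)⁻¹ := by
    intro g x
    have := hθ x g⁻¹ g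
    simp only [inv_mul_cancel, hθ1] at this
    exact (eq_inv_of_mul_eq_one_left this.symm)
  have hequiv : Equivalence (simRel θ) := by
    constructor
    · intro p; exact ⟨1, by simp [hθ1]⟩
    · rintro ⟨η, x⟩ ⟨η', x'⟩ ⟨g, hx, hη⟩
      refine ⟨g⁻¹, ?_, ?_⟩
      · simp only at hx ⊢; rw [hx]; simp
      · simp only at hx hη ⊢
        subst hx; rw [hη, hinv]; group
    · rintro ⟨η, x⟩ ⟨η', x'⟩ ⟨η'', x''⟩ ⟨g, hx, hη⟩ ⟨g', hx', hη'⟩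
      simp only at *
      refine ⟨g' * g, ?_, ?_⟩
      · rw [mul_smul, ← hx, hx']
      · rw [hη, hη', hθ, hx, mul_assoc]
  have key : ∀ p q : H × X, Quot.mk (simRel θ) p = Quot.mk (simRel θ) q → simRel θ p q := by
    intro p q h
    exact (hequiv.eqvGen_iff).mp (Quot.eqvGen_exact h)
  refine ⟨?_, ?_, ?_, ?_⟩
  · refine ⟨Quot.lift (fun p => p.1 • α p.2) ?_, fun η x => rfl, ?_, ?_⟩
    · rintro ⟨η, x⟩ ⟨η', x'⟩ ⟨g, hx, hη⟩
      simp only at *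
      rw [hx, hη, hαθ, mul_smul]
    · intro h η x; simp [mul_smul]
    · intro x; simp
  · intro g x
    exact Quot.sound ⟨g⁻¹, by simp, by simp [hinv]⟩
  · intro q
    obtain ⟨⟨h, x⟩, rfl⟩ := Quot.exists_rep q
    exact ⟨h, x, rfl⟩
  · intro h h' x x' he
    exact key _ _ he
end
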